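/- arXiv:2512.22729 — 2 statements merged into one kernel-verified Lean document; each statement's English description precedes it below -/
import Mathlib

section
/- Let k ≥ 2, let G = (V, E) be a finite directed graph with at least one edge and no isolated vertices, let χ : V → {1,…,k} be a proper coloring of G, let α > 0, and let pos : V → [0,1] be the fractional assignment defined by the recursive rule pos(v) = clamp( (y_out(v) + Σ_{(v,u) ∈ E_out^lo(v)} (1 − pos(u)) − Σ_{(u,v) ∈ E_in^lo(v)} pos(u)) / (y_in(v) + y_out(v)) ). Then (1/2 − α) · maxval(G) ≤ val(G, pos) ≤ maxval(G). -/
/-!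
Lower bound. Fix a Boolean assignment `g` and the thresholds
`t v = (1 - α)/2 · g v + (1 + α)/4 ∈ [0, 1]`. The weight `(1/2 - α) g(u) (1 - g(w))` of every edge
is covered by a charge at each endpoint (a case check on `g(u), g(w)`); the endpoint of higher
colour is charged `α · min(c, 0)` for its own quadratic term `c`, the other one `c` itself. At a
vertex `v` with `p = pos v = clamp z`, since `y_in` and `y_out` dominate these weighted terms, the
charges fall short of the value `pos` earns on the edges from `v` to lower colours by at least
`(y_in + y_out)(p - t v)(z - p)`, which is nonnegative because `clamp` is the projection onto
`[0, 1]`. Summing over the vertices gives `(1/2 - α) val(g) ≤ val(pos)`.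

Upper bound. Without loops, `val` is affine in each coordinate, so fractional coordinates can be
rounded one at a time without decreasing it.
-/

open scoped BigOperators

/-- `clamp x = max(0, min(1, x))`. -/
noncomputable def clamp (x : ℝ) : ℝ := max 0 (min 1 x)

/-- The (fractional) directed-cut value:
`val(G, f) = (1/|E|) * Σ_{(u,v) ∈ E} f(u) * (1 - f(v))`. -/
noncomputable def dival {V : Type*} (E : Multiset (V × V)) (f : V → ℝ) : ℝ :=
  (1 / (E.card : ℝ)) * (E.map (fun e => f e.1 * (1 - f e.2))).sum

/-- Incoming edges of `v` from lower-colored vertices. -/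
def EinLo {V : Type*} [DecidableEq V] (E : Multiset (V × V)) (χ : V → ℕ) (v : V) :
    Multiset (V × V) := E.filter (fun e => e.2 = v ∧ χ e.1 < χ v)

/-- Outgoing edges of `v` to lower-colored vertices. -/
def EoutLo {V : Type*} [DecidableEq V] (E : Multiset (V × V)) (χ : V → ℕ) (v : V) :
    Multiset (V × V) := E.filter (fun e => e.1 = v ∧ χ e.2 < χ v)

/-- Incoming edges of `v` from higher-colored vertices. -/
def EinHi {V : Type*} [DecidableEq V] (E : Multiset (V × V)) (χ : V → ℕ) (v : V) :
    Multiset (V × V) := E.filter (fun e => e.2 = v ∧ χ v < χ e.1)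

/-- Outgoing edges of `v` to higher-colored vertices. -/
def EoutHi {V : Type*} [DecidableEq V] (E : Multiset (V × V)) (χ : V → ℕ) (v : V) :
    Multiset (V × V) := E.filter (fun e => e.1 = v ∧ χ v < χ e.2)

/-- `y_in(v) = max(|E_in^hi(v)|, α·|E_in^lo(v)|)`. -/
noncomputable def yIn {V : Type*} [DecidableEq V] (E : Multiset (V × V)) (χ : V → ℕ)
    (α : ℝ) (v : V) : ℝ :=
  max ((EinHi E χ v).card : ℝ) (α * ((EinLo E χ v).card : ℝ))

/-- `y_out(v) = max(|E_out^hi(v)|, α·|E_out^lo(v)|)`. -/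
noncomputable def yOut {V : Type*} [DecidableEq V] (E : Multiset (V × V)) (χ : V → ℕ)
    (α : ℝ) (v : V) : ℝ :=
  max ((EoutHi E χ v).card : ℝ) (α * ((EoutLo E χ v).card : ℝ))

/-- `maxval(G)`: the maximum (as a supremum, which is attained since `V` is finite)
of `val(G, g)` over Boolean assignments `g : V → {0,1}`. -/
noncomputable def maxval {V : Type*} (E : Multiset (V × V)) : ℝ :=
  sSup {x : ℝ | ∃ g : V → ℝ, (∀ v, g v = 0 ∨ g v = 1) ∧ x = dival E g}

open Set

theorem clamp_mem_Icc (z : ℝ) : clamp z ∈ Icc (0 : ℝ) 1 :=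
  ⟨le_max_left _ _, max_le zero_le_one (min_le_left _ _)⟩

/-- `clamp` is the projection onto `[0, 1]`. -/
theorem clamp_sub_mul_sub_nonpos {t : ℝ} (ht : t ∈ Icc (0 : ℝ) 1) (z : ℝ) :
    (t - clamp z) * (z - clamp z) ≤ 0 := by
  obtain ⟨ht0, ht1⟩ := ht
  unfold clamp
  rcases le_total z 0 with hz | hz
  · rw [min_eq_right (by linarith), max_eq_left hz]; nlinarith
  rcases le_total 1 z with hz1 | hz1
  · rw [min_eq_left hz1, max_eq_right zero_le_one]; nlinarith
  · rw [min_eq_right hz1, max_eq_right hz]; simp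

theorem mul_add_mul_min_zero_le_max_mul {a b : ℝ} (ha : 0 ≤ a) (hb : 0 ≤ b) (c : ℝ) :
    a * c + b * min c 0 ≤ max a b * c := by
  rcases le_total 0 c with hc | hc
  · rw [min_eq_right hc, mul_zero, add_zero]
    exact mul_le_mul_of_nonneg_right (le_max_left a b) hc
  · rw [min_eq_left hc, ← add_mul]
    exact mul_le_mul_of_nonpos_right (max_le (by linarith) (by linarith)) hc

theorem vertex_charge_le {α t SA SB Hi Li Ho Lo p : ℝ} (hα : 0 ≤ α) (ht : t ∈ Icc (0 : ℝ) 1)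
    (hHi : 0 ≤ Hi) (hLi : 0 ≤ Li) (hHo : 0 ≤ Ho) (hLo : 0 ≤ Lo)
    (hD : 0 < max Hi (α * Li) + max Ho (α * Lo))
    (hp : p = clamp ((max Ho (α * Lo) + SB - SA) / (max Hi (α * Li) + max Ho (α * Lo)))) :
    (1 - t) * SA + α * Li * min (p * (p - t)) 0 + (t * SB + α * Lo * min ((1 - p) * (t - p)) 0)
        + Hi * (p * (p - t)) + Ho * ((1 - p) * (t - p))
      ≤ SA * (1 - p) + p * SB := by
  set Mi := max Hi (α * Li)
  set Mo := max Ho (α * Lo)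
  set z := (Mo + SB - SA) / (Mi + Mo)
  have hz : (Mi + Mo) * z = Mo + SB - SA := mul_div_cancel₀ _ hD.ne'
  have hproj : 0 ≤ (Mi + Mo) * ((p - t) * (z - p)) := by
    have := clamp_sub_mul_sub_nonpos ht z
    rw [← hp] at this
    nlinarith
  have hin := mul_add_mul_min_zero_le_max_mul hHi (mul_nonneg hα hLi) (p * (p - t))
  have hout := mul_add_mul_min_zero_le_max_mul hHo (mul_nonneg hα hLo) ((1 - p) * (t - p))
  have hbal : SA * (1 - p) + p * SB - ((1 - t) * SA + t * SB + Mi * (p * (p - t))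
      + Mo * ((1 - p) * (t - p))) = (Mi + Mo) * ((p - t) * (z - p)) := by
    linear_combination (t - p) * hz
  linarith

noncomputable def cutThreshold (α b : ℝ) : ℝ := (1 - α) / 2 * b + (1 + α) / 4

theorem cutThreshold_one_sub (α b : ℝ) : cutThreshold α (1 - b) = 1 - cutThreshold α b := by
  unfold cutThreshold; ring

theorem cutThreshold_mem_Icc {α b : ℝ} (hα : 0 ≤ α) (hα2 : α ≤ 1 / 2) (hb : b = 0 ∨ b = 1) :
    cutThreshold α b ∈ Icc (0 : ℝ) 1 := by
  unfold cutThreshold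
  rcases hb with rfl | rfl <;> constructor <;> linarith

theorem neg_sq_div_four_le_min_mul_sub (y t : ℝ) : -(t ^ 2 / 4) ≤ min (y * (y - t)) 0 :=
  le_min (by nlinarith [sq_nonneg (2 * y - t)]) (by nlinarith [sq_nonneg t])

theorem cut_le_charges_ascending {α a b x y : ℝ} (hα : 0 ≤ α) (hα2 : α ≤ 1 / 2)
    (ha : a = 0 ∨ a = 1) (hb : b = 0 ∨ b = 1) :
    (1 / 2 - α) * (a * (1 - b))
      ≤ (1 - cutThreshold α b) * x + α * min (y * (y - cutThreshold α b)) 0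
        + (1 - x) * (cutThreshold α a - x) := by
  have hmin := mul_le_mul_of_nonneg_left
    (neg_sq_div_four_le_min_mul_sub y (cutThreshold α b)) hα
  have hα_sq : α * α ≤ α / 2 := by nlinarith
  have hα_cube : α * α * α ≤ α / 4 := by nlinarith
  unfold cutThreshold at *
  rcases ha with rfl | rfl <;> rcases hb with rfl | rfl
  · nlinarith [sq_nonneg (4 * x - 1 - α)]
  · nlinarith [sq_nonneg (2 * x - 1)]
  · nlinarith [sq_nonneg (2 * x - 1)]
  · nlinarith [sq_nonneg (4 * x - 3 + α)]

theorem cut_le_charges_descending {α a b x y : ℝ} (hα : 0 ≤ α) (hα2 : α ≤ 1 / 2)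
    (ha : a = 0 ∨ a = 1) (hb : b = 0 ∨ b = 1) :
    (1 / 2 - α) * (a * (1 - b))
      ≤ cutThreshold α a * (1 - y) + α * min ((1 - x) * (cutThreshold α a - x)) 0
        + y * (y - cutThreshold α b) := by
  have h := cut_le_charges_ascending (a := 1 - b) (b := 1 - a) (x := 1 - y) (y := 1 - x) hα hα2
    (by rcases hb with rfl | rfl <;> norm_num) (by rcases ha with rfl | rfl <;> norm_num)
  simp only [cutThreshold_one_sub] at h
  calc (1 / 2 - α) * (a * (1 - b)) = (1 / 2 - α) * ((1 - b) * (1 - (1 - a))) := by ring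
    _ ≤ _ := h
    _ = _ := by rw [show 1 - x - (1 - cutThreshold α a) = cutThreshold α a - x by ring]; ring

theorem sum_univ_sum_map_filter_key_eq {V β : Type*} [Fintype V] [DecidableEq V]
    (F : Multiset β) (key : β → V) (Q : β → V → Prop) [∀ e v, Decidable (Q e v)]
    (φ : β → V → ℝ) :
    ∑ v, ((F.filter fun e => key e = v ∧ Q e v).map fun e => φ e v).sum
      = ((F.filter fun e => Q e (key e)).map fun e => φ e (key e)).sum := by
  induction F using Multiset.induction_on with
  | empty => simp
  | cons a F ih =>
    simp only [Multiset.filter_cons, Multiset.map_add, Multiset.sum_add, Finset.sum_add_distrib,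
      ih]
    congr 1
    rw [Finset.sum_eq_single_of_mem (key a) (Finset.mem_univ _)
      (fun x _ hx => by simp [Ne.symm hx])]
    by_cases hQ : Q a (key a) <;> simp [hQ]

theorem sum_map_filter_add_sum_map_filter_not {β : Type*} (s : Multiset β) (p : β → Prop)
    [DecidablePred p] (f : β → ℝ) :
    ((s.filter p).map f).sum + ((s.filter fun a => ¬ p a).map f).sum = (s.map f).sum := by
  rw [← Multiset.sum_add, ← Multiset.map_add, Multiset.filter_add_not]

section Charging

variable {V : Type*} [DecidableEq V] {E : Multiset (V × V)} {χ : V → ℕ} {α : ℝ}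

theorem yIn_add_yOut_pos (hα : 0 < α) (hproper : ∀ e ∈ E, χ e.1 ≠ χ e.2) {v : V} {e : V × V}
    (he : e ∈ E) (hv : e.1 = v ∨ e.2 = v) : 0 < yIn E χ α v + yOut E χ α v := by
  have hin : 0 ≤ yIn E χ α v := le_max_of_le_left (Nat.cast_nonneg _)
  have hout : 0 ≤ yOut E χ α v := le_max_of_le_left (Nat.cast_nonneg _)
  have hcard {s : Multiset (V × V)} (hs : e ∈ s) : (0 : ℝ) < Multiset.card s := by
    exact_mod_cast Multiset.card_pos_iff_exists_mem.2 ⟨e, hs⟩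
  rcases hv with rfl | rfl <;> rcases (hproper e he).lt_or_gt with h | h
  · exact add_pos_of_nonneg_of_pos hin
      ((hcard (Multiset.mem_filter.2 ⟨he, rfl, h⟩)).trans_le (le_max_left _ _))
  · exact add_pos_of_nonneg_of_pos hin
      ((mul_pos hα (hcard (Multiset.mem_filter.2 ⟨he, rfl, h⟩))).trans_le (le_max_right _ _))
  · exact add_pos_of_pos_of_nonneg
      ((mul_pos hα (hcard (Multiset.mem_filter.2 ⟨he, rfl, h⟩))).trans_le (le_max_right _ _)) hout
  · exact add_pos_of_pos_of_nonneg
      ((hcard (Multiset.mem_filter.2 ⟨he, rfl, h⟩)).trans_le (le_max_left _ _)) hout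

theorem vertex_charge_sum_le (hα : 0 < α) {pos : V → ℝ} {v : V}
    (hD : 0 < yIn E χ α v + yOut E χ α v)
    (hv : pos v = clamp ((yOut E χ α v
        + ((EoutLo E χ v).map (fun e => 1 - pos e.2)).sum
        - ((EinLo E χ v).map (fun e => pos e.1)).sum)
        / (yIn E χ α v + yOut E χ α v)))
    {t : ℝ} (ht : t ∈ Icc (0 : ℝ) 1) :
    ((EinLo E χ v).map fun e => (1 - t) * pos e.1 + α * min (pos v * (pos v - t)) 0).sum
      + ((EoutLo E χ v).map fun e =>
          t * (1 - pos e.2) + α * min ((1 - pos v) * (t - pos v)) 0).sum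
      + ((EinHi E χ v).map fun _ => pos v * (pos v - t)).sum
      + ((EoutHi E χ v).map fun _ => (1 - pos v) * (t - pos v)).sum
    ≤ ((EinLo E χ v).map fun e => pos e.1 * (1 - pos v)).sum
      + ((EoutLo E χ v).map fun e => pos v * (1 - pos e.2)).sum := by
  have key := vertex_charge_le hα.le ht (Nat.cast_nonneg _) (Nat.cast_nonneg _)
    (Nat.cast_nonneg _) (Nat.cast_nonneg _) hD hv
  simp only [Multiset.sum_map_add, Multiset.sum_map_mul_left, Multiset.sum_map_mul_right,
    Multiset.map_const', Multiset.sum_replicate, nsmul_eq_mul]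
  linarith

theorem half_sub_mul_dival_le [Fintype V] (hα : 0 < α) (hα2 : α ≤ 1 / 2)
    (hnoiso : ∀ v : V, ∃ e ∈ E, e.1 = v ∨ e.2 = v) (hproper : ∀ e ∈ E, χ e.1 ≠ χ e.2)
    {pos : V → ℝ}
    (hpos : ∀ v, pos v = clamp ((yOut E χ α v
        + ((EoutLo E χ v).map (fun e => 1 - pos e.2)).sum
        - ((EinLo E χ v).map (fun e => pos e.1)).sum)
        / (yIn E χ α v + yOut E χ α v)))
    {g : V → ℝ} (hg : ∀ v, g v = 0 ∨ g v = 1) :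
    (1 / 2 - α) * dival E g ≤ dival E pos := by
  unfold dival
  rw [mul_left_comm]
  refine mul_le_mul_of_nonneg_left ?_ (by positivity)
  have hvertex := Finset.sum_le_sum fun v (_ : v ∈ Finset.univ) =>
    vertex_charge_sum_le hα
      (by obtain ⟨e, he, hv⟩ := hnoiso v; exact yIn_add_yOut_pos hα hproper he hv)
      (hpos v) (cutThreshold_mem_Icc hα.le hα2 (hg v))
  -- Regroup by edges: an ascending edge is seen from above through `EinLo` and from below
  -- through `EoutHi`, a descending one through `EoutLo` and `EinHi`.
  simp only [Finset.sum_add_distrib, EinLo, EoutLo, EinHi, EoutHi,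
    sum_univ_sum_map_filter_key_eq, Multiset.sum_map_add] at hvertex
  have hlo := Multiset.sum_map_le_sum_map _ _
    fun e (_ : e ∈ E.filter fun e => χ e.1 < χ e.2) =>
      cut_le_charges_ascending (x := pos e.1) (y := pos e.2) hα.le hα2 (hg e.1) (hg e.2)
  have hhi := Multiset.sum_map_le_sum_map _ _
    fun e (_ : e ∈ E.filter fun e => χ e.2 < χ e.1) =>
      cut_le_charges_descending (x := pos e.1) (y := pos e.2) hα.le hα2 (hg e.1) (hg e.2)
  have hsplit (f : V × V → ℝ) : ((E.filter fun e => χ e.1 < χ e.2).map f).sum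
      + ((E.filter fun e => χ e.2 < χ e.1).map f).sum = (E.map f).sum := by
    rw [← sum_map_filter_add_sum_map_filter_not E (fun e => χ e.1 < χ e.2)]
    congr 3
    exact Multiset.filter_congr fun e he => by have := hproper e he; omega
  simp only [Multiset.sum_map_add] at hlo hhi
  rw [← Multiset.sum_map_mul_left, ← hsplit, ← hsplit]
  linarith

end Charging

theorem dival_nonneg {V : Type*} {E : Multiset (V × V)} {f : V → ℝ}
    (hf : ∀ v, f v ∈ Icc (0 : ℝ) 1) : 0 ≤ dival E f :=
  mul_nonneg (by positivity) (Multiset.sum_nonneg fun x hx => by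
    obtain ⟨e, -, rfl⟩ := Multiset.mem_map.1 hx
    exact mul_nonneg (hf e.1).1 (sub_nonneg.2 (hf e.2).2))

section Rounding

variable {V : Type*} [DecidableEq V] {E : Multiset (V × V)}

theorem dival_eq_update (hloop : ∀ e ∈ E, e.1 ≠ e.2) (f : V → ℝ) (v : V) :
    dival E f = (1 - f v) * dival E (Function.update f v 0)
      + f v * dival E (Function.update f v 1) := by
  have h : ∀ e ∈ E, f e.1 * (1 - f e.2)
      = (1 - f v) * (Function.update f v 0 e.1 * (1 - Function.update f v 0 e.2))
        + f v * (Function.update f v 1 e.1 * (1 - Function.update f v 1 e.2)) := by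
    intro e he
    rcases eq_or_ne e.1 v with h1 | h1 <;> rcases eq_or_ne e.2 v with h2 | h2
    · exact absurd (h1.trans h2.symm) (hloop e he)
    all_goals simp only [Function.update_apply, h1, h2, if_true, if_false]; ring
  unfold dival
  rw [Multiset.map_congr rfl h, Multiset.sum_map_add, Multiset.sum_map_mul_left,
    Multiset.sum_map_mul_left]
  ring

theorem exists_bool_dival_ge [Fintype V] (hloop : ∀ e ∈ E, e.1 ≠ e.2) {f : V → ℝ}
    (hf : ∀ v, f v ∈ Icc (0 : ℝ) 1) :
    ∃ g : V → ℝ, (∀ v, g v = 0 ∨ g v = 1) ∧ dival E f ≤ dival E g := by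
  suffices ∀ s : Finset V, ∀ f : V → ℝ, (∀ v, f v ∈ Icc (0 : ℝ) 1) →
      (∀ v ∉ s, f v = 0 ∨ f v = 1) →
      ∃ g : V → ℝ, (∀ v, g v = 0 ∨ g v = 1) ∧ dival E f ≤ dival E g
    from this Finset.univ f hf (by simp)
  intro s
  induction s using Finset.induction_on with
  | empty => exact fun f _ hbool => ⟨f, fun v => hbool v (Finset.notMem_empty v), le_rfl⟩
  | insert a s _ ih =>
    intro f hf hbool
    have hupdate (b : ℝ) (hb : b = 0 ∨ b = 1) : ∃ g : V → ℝ, (∀ v, g v = 0 ∨ g v = 1) ∧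
        dival E (Function.update f a b) ≤ dival E g := by
      refine ih _ (fun v => ?_) (fun v hv => ?_) <;> rcases eq_or_ne v a with rfl | hva
      · rcases hb with rfl | rfl <;> simp
      · simpa [hva] using hf v
      · simpa using hb
      · simpa [hva] using hbool v (by simp [hva, hv])
    obtain ⟨g₀, hg₀, h₀⟩ := hupdate 0 (Or.inl rfl)
    obtain ⟨g₁, hg₁, h₁⟩ := hupdate 1 (Or.inr rfl)
    have hsplit := dival_eq_update hloop f a
    obtain ⟨ha₀, ha₁⟩ := hf a
    rcases le_total (dival E (Function.update f a 0)) (dival E (Function.update f a 1)) with h | h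
    · exact ⟨g₁, hg₁, by nlinarith⟩
    · exact ⟨g₀, hg₀, by nlinarith⟩

end Rounding

section Maxval

variable {V : Type*} [Fintype V] {E : Multiset (V × V)}

theorem maxval_set_finite :
    {x : ℝ | ∃ g : V → ℝ, (∀ v, g v = 0 ∨ g v = 1) ∧ x = dival E g}.Finite := by
  refine (Set.finite_range fun b : V → Bool => dival E fun v => if b v then 1 else 0).subset ?_
  rintro x ⟨g, hg, rfl⟩
  refine ⟨fun v => decide (g v = 1), congrArg _ (funext fun v => ?_)⟩
  rcases hg v with h | h <;> simp [h]

theorem dival_le_maxval {g : V → ℝ} (hg : ∀ v, g v = 0 ∨ g v = 1) : dival E g ≤ maxval E :=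
  le_csSup maxval_set_finite.bddAbove ⟨g, hg, rfl⟩

theorem exists_maxval_eq_dival :
    ∃ g : V → ℝ, (∀ v, g v = 0 ∨ g v = 1) ∧ maxval E = dival E g := by
  refine Set.Nonempty.csSup_mem ?_ maxval_set_finite
  exact ⟨_, fun _ => 0, fun _ => Or.inl rfl, rfl⟩

end Maxval

theorem stmt3_general {V : Type*} [Fintype V] [DecidableEq V]
    (E : Multiset (V × V))
    (hnoiso : ∀ v : V, ∃ e ∈ E, e.1 = v ∨ e.2 = v)
    (χ : V → ℕ)
    (hproper : ∀ e ∈ E, χ e.1 ≠ χ e.2)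
    (α : ℝ) (hα : 0 < α)
    (pos : V → ℝ)
    (hpos : ∀ v, pos v = clamp ((yOut E χ α v
        + ((EoutLo E χ v).map (fun e => 1 - pos e.2)).sum
        - ((EinLo E χ v).map (fun e => pos e.1)).sum)
        / (yIn E χ α v + yOut E χ α v))) :
    (1 / 2 - α) * maxval E ≤ dival E pos ∧ dival E pos ≤ maxval E := by
  have hpos01 (v : V) : pos v ∈ Icc (0 : ℝ) 1 := by rw [hpos v]; exact clamp_mem_Icc _
  have hloop : ∀ e ∈ E, e.1 ≠ e.2 := fun e he h => hproper e he (congrArg χ h)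
  obtain ⟨g, hg, hmax⟩ := exists_maxval_eq_dival (E := E)
  refine ⟨?_, ?_⟩
  · rw [hmax]
    rcases le_or_gt α (1 / 2) with hα2 | hα2
    · exact half_sub_mul_dival_le hα hα2 hnoiso hproper hpos hg
    · have hg01 (v : V) : g v ∈ Icc (0 : ℝ) 1 := by rcases hg v with h | h <;> simp [h]
      nlinarith [dival_nonneg (E := E) hg01, dival_nonneg (E := E) hpos01]
  · obtain ⟨g', hg', hle⟩ := exists_bool_dival_ge hloop hpos01
    exact hle.trans (dival_le_maxval hg')

/-- Let `k ≥ 2`, `G = (V, E)` a finite directed graph with at least one edge and no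
isolated vertices, `χ` a proper coloring with colors in `{1,…,k}`, `α > 0`, and let
`pos` satisfy the recursive rule of Algorithm 1. Then
`(1/2 − α)·maxval(G) ≤ val(G, pos) ≤ maxval(G)`. -/
theorem stmt3 {V : Type*} [Fintype V] [DecidableEq V] (k : ℕ) (hk : 2 ≤ k)
    (E : Multiset (V × V)) (hE : E ≠ 0)
    (hnoiso : ∀ v : V, ∃ e ∈ E, e.1 = v ∨ e.2 = v)
    (χ : V → ℕ) (hχrange : ∀ v, χ v ∈ Finset.Icc 1 k)
    (hproper : ∀ e ∈ E, χ e.1 ≠ χ e.2)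
    (α : ℝ) (hα : 0 < α)
    (pos : V → ℝ)
    (hpos : ∀ v, pos v = clamp ((yOut E χ α v
        + ((EoutLo E χ v).map (fun e => 1 - pos e.2)).sum
        - ((EinLo E χ v).map (fun e => pos e.1)).sum)
        / (yIn E χ α v + yOut E χ α v))) :
    (1 / 2 - α) * maxval E ≤ dival E pos ∧ dival E pos ≤ maxval E :=
  stmt3_general E hnoiso χ hproper α hα pos hpos
end

section
/- Fix ε ∈ (0, 0.01], an integer n, and set k = ⌈1/ε²⌉, α = ε⁴, δ₀ = ε^(4^(k+1)), q = 2^(−(k+1)). Let G = (V, E) be a finite directed graph on at most n vertices with proper k-coloring χ and no isolated vertices, and let pos be the fractional assignment defined by Algorithm 1 with parameter α. Let v be a vertex with d(v) ≥ n^(2q) satisfying: (A2) d⁻(v) ≥ ε²·d(v) and d⁺(v) ≥ ε²·d(v); and (A3) for every color a ≠ χ(v), |d_a⁻(v) − d⁻(v)/(k−1)| ≤ δ₀·d(v)/(k−1) and |d_a⁺(v) − d⁺(v)/(k−1)| ≤ δ₀·d(v)/(k−1). Then |pos(v) − tpos(v)| ≤ 3·δ₀·k², where tpos(v) = clamp(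 ((α+1)/α)·(d⁺(v)/d(v)) − z̄(v)/α ) if χ(v) = k, and tpos(v) = clamp( ((k−1)/(k−χ(v)))·(d⁺(v)/d(v)) − ((χ(v)−1)/(k−χ(v)))·z̄(v) ) if χ(v) ≠ k. -/
open scoped BigOperators

/-- In-degree of `v`. -/
def dIn {V : Type*} [DecidableEq V] (E : Multiset (V × V)) (v : V) : ℕ :=
  (E.filter (fun e => e.2 = v)).card

/-- Out-degree of `v`. -/
def dOut {V : Type*} [DecidableEq V] (E : Multiset (V × V)) (v : V) : ℕ :=
  (E.filter (fun e => e.1 = v)).card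

/-- Total degree of `v`. -/
def dTot {V : Type*} [DecidableEq V] (E : Multiset (V × V)) (v : V) : ℕ :=
  dIn E v + dOut E v

/-- Number of incoming edges of `v` whose other endpoint has color `a`. -/
def dInC {V : Type*} [DecidableEq V] (E : Multiset (V × V)) (χ : V → ℕ) (v : V) (a : ℕ) : ℕ :=
  (E.filter (fun e => e.2 = v ∧ χ e.1 = a)).card

/-- Number of outgoing edges of `v` whose other endpoint has color `a`. -/
def dOutC {V : Type*} [DecidableEq V] (E : Multiset (V × V)) (χ : V → ℕ) (v : V) (a : ℕ) : ℕ :=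
  (E.filter (fun e => e.1 = v ∧ χ e.2 = a)).card

/-- `z̄(v)`: the average of `pos(u)` over the lower-colored neighbors `u` of `v`
(counted with edge multiplicity over `E_in^lo(v)` and `E_out^lo(v)`), defined to be
`0` if `v` has no lower-colored neighbor. -/
noncomputable def zbar {V : Type*} [DecidableEq V] (E : Multiset (V × V)) (χ : V → ℕ)
    (pos : V → ℝ) (v : V) : ℝ :=
  if (EinLo E χ v).card + (EoutLo E χ v).card = 0 then 0
  else (((EinLo E χ v).map (fun e => pos e.1)).sum
      + ((EoutLo E χ v).map (fun e => pos e.2)).sum)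
    / (((EinLo E χ v).card + (EoutLo E χ v).card : ℕ) : ℝ)

/-- The estimate `tpos(v)` for the position of a high-degree vertex `v`. -/
noncomputable def tpos {V : Type*} [DecidableEq V] (E : Multiset (V × V)) (χ : V → ℕ)
    (pos : V → ℝ) (k : ℕ) (α : ℝ) (v : V) : ℝ :=
  if χ v = k then
    clamp (((α + 1) / α) * ((dOut E v : ℝ) / (dTot E v : ℝ)) - zbar E χ pos v / α)
  else
    clamp ((((k : ℝ) - 1) / ((k : ℝ) - (χ v : ℝ))) * ((dOut E v : ℝ) / (dTot E v : ℝ))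
      - (((χ v : ℝ) - 1) / ((k : ℝ) - (χ v : ℝ))) * zbar E χ pos v)

/-!
By (A3), summing over the `χ(v) - 1` lower colors, `v` has `β·d⁻(v)` lower in-neighbours and
`γ·d⁻(v)` higher ones up to an error `δ₀·d(v)`, where `β = (χ(v)-1)/(k-1)` and
`γ = (k-χ(v))/(k-1)`; likewise for out-neighbours.

If `χ(v) = k` there are no higher neighbours, so `y_in`, `y_out` are `α` times the degrees and the
argument of the clamp in Algorithm 1 is exactly that of `tpos(v)`.

Otherwise `γ ≥ 1/(k-1) ≥ ε²`, and (A2) makes the higher counts dominate `α` times the lower ones,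
so `y_in`, `y_out` are the higher counts. Writing the argument of `tpos(v)` as
`(d⁺ - β·z̄·d)/(γ·d)`, the argument of Algorithm 1 differs from it in numerator and denominator
by `O(δ₀·d)`, while both denominators are `≳ ε²·d`. As `clamp` is 1-Lipschitz, the error is
`O(δ₀/ε⁴) = O(δ₀·k²)`.
-/

theorem clamp_mem_Icc_s4 (x : ℝ) : clamp x ∈ Set.Icc 0 1 :=
  ⟨le_max_left _ _, max_le zero_le_one (min_le_left _ _)⟩

theorem abs_clamp_sub_clamp_le (x y : ℝ) : |clamp x - clamp y| ≤ |x - y| := by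
  rw [clamp, clamp, max_comm 0, max_comm 0]
  refine (abs_max_sub_max_le_abs _ _ _).trans ?_
  simpa using abs_min_sub_min_le_max 1 x 1 y

theorem abs_div_sub_div_le {N N' M M' a b B m m' : ℝ} (hm : 0 < m) (hm' : 0 < m')
    (hM : m ≤ M) (hM' : m' ≤ M') (hN : |N - N'| ≤ a) (hMM : |M - M'| ≤ b) (hN' : |N'| ≤ B) :
    |N / M - N' / M'| ≤ a / m + B * b / (m * m') := by
  have hMpos : 0 < M := hm.trans_le hM
  have hM'pos : 0 < M' := hm'.trans_le hM'
  have hsplit : N / M - N' / M' = (N - N') / M + N' * (M' - M) / (M * M') := by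
    field_simp
    ring
  rw [hsplit]
  refine (abs_add_le _ _).trans (add_le_add ?_ ?_)
  · rw [abs_div, abs_of_pos hMpos]
    exact div_le_div₀ ((abs_nonneg _).trans hN) hN hm hM
  · rw [abs_div, abs_mul, abs_of_pos (mul_pos hMpos hM'pos), abs_sub_comm]
    exact div_le_div₀ (mul_nonneg ((abs_nonneg _).trans hN') ((abs_nonneg _).trans hMM))
      (mul_le_mul hN' hMM (abs_nonneg _) ((abs_nonneg _).trans hN')) (mul_pos hm hm')
      (mul_le_mul hM hM' hm'.le hMpos.le)

theorem abs_sum_sub_card_mul_le {ι : Type*} (A : Finset ι) (x : ι → ℝ) {m r : ℝ}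
    (h : ∀ a ∈ A, |x a - m| ≤ r) : |∑ a ∈ A, x a - A.card * m| ≤ A.card * r := by
  rw [← nsmul_eq_mul, ← Finset.sum_const, ← Finset.sum_sub_distrib, ← nsmul_eq_mul,
    ← Finset.sum_const]
  exact (Finset.abs_sum_le_sum_abs _ _).trans (Finset.sum_le_sum h)

theorem abs_sum_Ico_sub_le {c k : ℕ} (hc : 1 ≤ c) (hck : c ≤ k) (x : ℕ → ℝ) {d r : ℝ}
    (hr : 0 ≤ r) (h : ∀ a ∈ Finset.Ico 1 c, |x a - d / (k - 1)| ≤ r / (k - 1)) :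
    |∑ a ∈ Finset.Ico 1 c, x a - (c - 1) / (k - 1) * d| ≤ r := by
  have hcard : ((Finset.Ico 1 c).card : ℝ) = c - 1 := by
    rw [Nat.card_Ico, Nat.cast_sub hc, Nat.cast_one]
  have hfrac : ((c : ℝ) - 1) / (k - 1) ≤ 1 :=
    div_le_one_of_le₀ (by gcongr) (by simpa using hc.trans hck)
  calc |∑ a ∈ Finset.Ico 1 c, x a - (c - 1) / (k - 1) * d|
      = |∑ a ∈ Finset.Ico 1 c, x a - (Finset.Ico 1 c).card * (d / (k - 1))| := by
        rw [hcard, mul_div_assoc', div_mul_eq_mul_div]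
    _ ≤ (Finset.Ico 1 c).card * (r / (k - 1)) := abs_sum_sub_card_mul_le _ _ h
    _ = (c - 1) / (k - 1) * r := by rw [hcard, mul_div_assoc', div_mul_eq_mul_div]
    _ ≤ r := mul_le_of_le_one_left hr hfrac

theorem mul_le_of_add_eq_of_abs_sub_le {α β d L H r : ℝ} (hα : 0 ≤ α) (hH : 0 ≤ H)
    (hLH : L + H = d) (hL : |L - β * d| ≤ r) (hr : r ≤ (1 - β - α) * d) : α * L ≤ H := by
  have : α * L ≤ α * d := mul_le_mul_of_nonneg_left (by linarith) hα
  linarith [(abs_le.1 hL).2]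

theorem abs_div_sub_div_le_of_lower_counts {β η δ z di dout Li Lo Hi Ho Si So : ℝ}
    (hη : 0 < η) (hβ : 0 ≤ β) (hγ : η ≤ 1 - β) (hz : z ∈ Set.Icc 0 1)
    (hdi : 0 ≤ di) (hdo : 0 ≤ dout) (hD : 0 < di + dout) (hin : Li + Hi = di) (hout : Lo + Ho = dout)
    (hLi : |Li - β * di| ≤ δ * (di + dout)) (hLo : |Lo - β * dout| ≤ δ * (di + dout))
    (hS : Si + So = z * (Li + Lo)) (hδ : 8 * δ ≤ η) :
    |(Ho + (Lo - So) - Si) / (Hi + Ho) - (dout - β * z * (di + dout)) / ((1 - β) * (di + dout))|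
      ≤ 8 / 3 * (δ / η + δ / η ^ 2) := by
  set D := di + dout
  -- Both numerator and denominator are off by a multiple of the same error `e`.
  set e := (Li - β * di) + (Lo - β * dout)
  have he : |e| ≤ 2 * (δ * D) := (abs_add_le _ _).trans (by linarith)
  have hN : |(Ho + (Lo - So) - Si) - (dout - β * z * D)| ≤ 2 * (δ * D) := by
    have : (Ho + (Lo - So) - Si) - (dout - β * z * D) = -(z * e) := by
      linear_combination hout - hS
    rw [this, abs_neg, abs_mul, abs_of_nonneg hz.1]
    exact (mul_le_of_le_one_left (abs_nonneg _) hz.2).trans he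
  have hM : |(Hi + Ho) - (1 - β) * D| ≤ 2 * (δ * D) := by
    have : (Hi + Ho) - (1 - β) * D = -e := by linear_combination hin + hout
    rwa [this, abs_neg]
  have hN' : |dout - β * z * D| ≤ D := by
    have : β * z ≤ 1 := mul_le_one₀ (by linarith) hz.1 hz.2
    rw [abs_le]; constructor <;> nlinarith [mul_nonneg hβ hz.1]
  have hM' : η * D ≤ (1 - β) * D := by gcongr
  have hm : 3 / 4 * (η * D) ≤ Hi + Ho := by
    have : δ * D ≤ η / 8 * D := by gcongr; linarith
    linarith [(abs_le.1 hM).1]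
  calc _ ≤ 2 * (δ * D) / (3 / 4 * (η * D)) + D * (2 * (δ * D)) / (3 / 4 * (η * D) * (η * D)) :=
        abs_div_sub_div_le (by positivity) (by positivity) hm hM' hN hM hN'
    _ = 8 / 3 * (δ / η + δ / η ^ 2) := by
        field_simp
        ring

theorem one_le_mul_ceil_one_div {η : ℝ} (hη : 0 < η) : 1 ≤ η * ⌈1 / η⌉₊ :=
  (div_le_iff₀' hη).1 (Nat.le_ceil _)

theorem mul_ceil_one_div_sub_one_le {η : ℝ} (hη : 0 < η) : η * (⌈1 / η⌉₊ - 1) ≤ 1 :=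
  (le_div_iff₀' hη).1 <| by linarith [Nat.ceil_lt_add_one (one_div_nonneg.2 hη.le)]

theorem eight_thirds_mul_add_div_sq_le {η δ k : ℝ} (hη : 0 < η) (hδ : 0 ≤ δ) (hηk : 1 ≤ η * k)
    (hk : 8 ≤ k) : 8 / 3 * (δ / η + δ / η ^ 2) ≤ 3 * δ * k ^ 2 := by
  have h1 : δ / η ≤ δ * k := by rw [div_le_iff₀ hη]; nlinarith
  have h2 : δ / η ^ 2 ≤ δ * k ^ 2 := by
    rw [div_le_iff₀ (by positivity)]
    nlinarith [mul_le_mul_of_nonneg_left (one_le_pow₀ (n := 2) hηk) hδ]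
  nlinarith [mul_nonneg (mul_nonneg hδ (by linarith : (0 : ℝ) ≤ k)) (by linarith : 0 ≤ k - 8)]

theorem eight_mul_pow_four_pow_le {ε : ℝ} (hε0 : 0 ≤ ε) (hε1 : ε ≤ 0.01) {k : ℕ} (hk : 1 ≤ k) :
    8 * ε ^ (4 ^ (k + 1)) ≤ (ε ^ 2) ^ 2 := by
  have h16 : ε ^ (4 ^ (k + 1)) ≤ ε ^ 16 := pow_le_pow_of_le_one hε0 (by linarith)
    (Nat.pow_le_pow_right (n := 4) (by norm_num) (by omega : 2 ≤ k + 1))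
  have h12 : ε ^ 12 ≤ 1 / 8 := (pow_le_pow_left₀ hε0 hε1 12).trans (by norm_num)
  nlinarith [pow_nonneg hε0 4]

namespace Multiset

variable {β ι : Type*} (s : Multiset β) (p : β → Prop) [DecidablePred p]

theorem card_filter_and_mem_eq_sum [DecidableEq ι] (f : β → ι) (A : Finset ι) :
    (s.filter fun e => p e ∧ f e ∈ A).card
      = ∑ a ∈ A, (s.filter fun e => p e ∧ f e = a).card := by
  induction s using Multiset.induction_on with
  | empty => simp
  | cons x s ih =>
    by_cases hp : p x
    · simp [filter_cons, hp, ih, Finset.sum_add_distrib, apply_ite card]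
    · simp [hp, ih]

theorem card_filter_and_lt_add_card_filter_and_gt [LinearOrder ι] (f : β → ι) (c : ι)
    (h : ∀ e ∈ s, p e → f e ≠ c) :
    (s.filter fun e => p e ∧ f e < c).card + (s.filter fun e => p e ∧ c < f e).card
      = (s.filter p).card := by
  rw [← filter_add_not (fun e => f e < c) (s.filter p), card_add, filter_filter, filter_filter]
  congr 2 <;> refine filter_congr fun e he => ?_
  · exact and_comm
  · have := h e he
    grind

theorem sum_map_one_sub (f : β → ℝ) : (s.map fun a => 1 - f a).sum = card s - (s.map f).sum := by
  simp [sum_map_sub]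

theorem sum_map_mem_Icc (f : β → ℝ) (h : ∀ a ∈ s, f a ∈ Set.Icc 0 1) :
    (s.map f).sum ∈ Set.Icc 0 (card s : ℝ) :=
  ⟨by simpa using sum_map_le_sum_map (fun _ => 0) f fun a ha => (h a ha).1,
    by simpa using sum_map_le_sum_map f (fun _ => 1) fun a ha => (h a ha).2⟩

end Multiset

section Coloring

variable {V : Type*} [DecidableEq V] (E : Multiset (V × V)) (χ : V → ℕ) (v : V)

theorem dTot_pos (h : ∃ e ∈ E, e.1 = v ∨ e.2 = v) : 0 < dTot E v := by
  obtain ⟨e, he, hv | hv⟩ := h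
  · exact Nat.add_pos_right _ <|
      Multiset.card_pos_iff_exists_mem.2 ⟨e, Multiset.mem_filter.2 ⟨he, hv⟩⟩
  · exact Nat.add_pos_left
      (Multiset.card_pos_iff_exists_mem.2 ⟨e, Multiset.mem_filter.2 ⟨he, hv⟩⟩) _

variable {E χ} in
theorem card_EinLo_add_card_EinHi (hproper : ∀ e ∈ E, χ e.1 ≠ χ e.2) :
    (EinLo E χ v).card + (EinHi E χ v).card = dIn E v :=
  E.card_filter_and_lt_add_card_filter_and_gt _ (fun e => χ e.1) (χ v)
    fun e he hv => hv ▸ hproper e he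

variable {E χ} in
theorem card_EoutLo_add_card_EoutHi (hproper : ∀ e ∈ E, χ e.1 ≠ χ e.2) :
    (EoutLo E χ v).card + (EoutHi E χ v).card = dOut E v :=
  E.card_filter_and_lt_add_card_filter_and_gt _ (fun e => χ e.2) (χ v)
    fun e he hv => (hv ▸ hproper e he).symm

variable {χ} in
theorem card_EinLo_eq_sum_dInC (hχ : ∀ u, 1 ≤ χ u) :
    (EinLo E χ v).card = ∑ a ∈ Finset.Ico 1 (χ v), dInC E χ v a := by
  refine (congrArg Multiset.card (Multiset.filter_congr fun e _ => ?_)).trans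
    (E.card_filter_and_mem_eq_sum _ (fun e => χ e.1) _)
  simp [hχ e.1]


variable {χ} in
theorem card_EoutLo_eq_sum_dOutC (hχ : ∀ u, 1 ≤ χ u) :
    (EoutLo E χ v).card = ∑ a ∈ Finset.Ico 1 (χ v), dOutC E χ v a := by
  refine (congrArg Multiset.card (Multiset.filter_congr fun e _ => ?_)).trans
    (E.card_filter_and_mem_eq_sum _ (fun e => χ e.2) _)
  simp [hχ e.2]

variable {E χ v} in
theorem abs_card_EinLo_sub_le {k : ℕ} {r : ℝ} (hχ : ∀ u, χ u ∈ Finset.Icc 1 k) (hr : 0 ≤ r)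
    (h : ∀ a ∈ Finset.Icc 1 k, a ≠ χ v →
      |(dInC E χ v a : ℝ) - dIn E v / ((k : ℝ) - 1)| ≤ r / ((k : ℝ) - 1)) :
    |((EinLo E χ v).card : ℝ) - ((χ v : ℝ) - 1) / ((k : ℝ) - 1) * dIn E v| ≤ r := by
  obtain ⟨hv1, hvk⟩ := Finset.mem_Icc.1 (hχ v)
  rw [card_EinLo_eq_sum_dInC E v fun u => (Finset.mem_Icc.1 (hχ u)).1, Nat.cast_sum]
  refine abs_sum_Ico_sub_le hv1 hvk _ hr fun a ha => h a ?_ ?_ <;> grind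

variable {E χ v} in
theorem abs_card_EoutLo_sub_le {k : ℕ} {r : ℝ} (hχ : ∀ u, χ u ∈ Finset.Icc 1 k) (hr : 0 ≤ r)
    (h : ∀ a ∈ Finset.Icc 1 k, a ≠ χ v →
      |(dOutC E χ v a : ℝ) - dOut E v / ((k : ℝ) - 1)| ≤ r / ((k : ℝ) - 1)) :
    |((EoutLo E χ v).card : ℝ) - ((χ v : ℝ) - 1) / ((k : ℝ) - 1) * dOut E v| ≤ r := by
  obtain ⟨hv1, hvk⟩ := Finset.mem_Icc.1 (hχ v)
  rw [card_EoutLo_eq_sum_dOutC E v fun u => (Finset.mem_Icc.1 (hχ u)).1, Nat.cast_sum]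
  refine abs_sum_Ico_sub_le hv1 hvk _ hr fun a ha => h a ?_ ?_ <;> grind

variable (pos : V → ℝ)

theorem zbar_mul_card :
    zbar E χ pos v * ((EinLo E χ v).card + (EoutLo E χ v).card)
      = ((EinLo E χ v).map fun e => pos e.1).sum + ((EoutLo E χ v).map fun e => pos e.2).sum := by
  rw [zbar]
  split_ifs with h
  · simp [Multiset.card_eq_zero.1 (Nat.eq_zero_of_add_eq_zero_right h),
      Multiset.card_eq_zero.1 (Nat.eq_zero_of_add_eq_zero_left h)]
  · rw [Nat.cast_add, div_mul_cancel₀]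
    exact_mod_cast h

variable {pos} in
theorem zbar_mem_Icc (hpos : ∀ u, pos u ∈ Set.Icc 0 1) : zbar E χ pos v ∈ Set.Icc 0 1 := by
  rw [zbar]
  split_ifs with h
  · simp
  have hin := (EinLo E χ v).sum_map_mem_Icc _ fun e _ => hpos e.1
  have hout := (EoutLo E χ v).sum_map_mem_Icc _ fun e _ => hpos e.2
  have hL : (0 : ℝ) < ((EinLo E χ v).card + (EoutLo E χ v).card : ℕ) := by positivity
  push_cast at hL ⊢
  exact ⟨div_nonneg (add_nonneg hin.1 hout.1) hL.le,
    div_le_one_of_le₀ (add_le_add hin.2 hout.2) hL.le⟩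

variable {E χ v pos} {k : ℕ} {α : ℝ}

theorem pos_eq_tpos_of_color_eq (hα : 0 < α) (hproper : ∀ e ∈ E, χ e.1 ≠ χ e.2)
    (hχ : ∀ u, χ u ≤ k) (hv : χ v = k) (hD : 0 < dTot E v)
    (hpos : pos v = clamp ((yOut E χ α v + ((EoutLo E χ v).map fun e => 1 - pos e.2).sum
        - ((EinLo E χ v).map fun e => pos e.1).sum) / (yIn E χ α v + yOut E χ α v))) :
    pos v = tpos E χ pos k α v := by
  have hHi : EinHi E χ v = 0 := Multiset.filter_eq_nil.2 fun e _ h => (hχ e.1).not_gt (hv ▸ h.2)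
  have hHo : EoutHi E χ v = 0 := Multiset.filter_eq_nil.2 fun e _ h => (hχ e.2).not_gt (hv ▸ h.2)
  have hin := card_EinLo_add_card_EinHi v hproper
  have hout := card_EoutLo_add_card_EoutHi v hproper
  have hz := zbar_mul_card E χ v pos
  rw [hHi, Multiset.card_zero, add_zero] at hin
  rw [hHo, Multiset.card_zero, add_zero] at hout
  rw [hpos, tpos, if_pos hv, yIn, yOut, hHi, hHo, Multiset.sum_map_one_sub]
  congr 1
  have hD' : (0 : ℝ) < dIn E v + dOut E v := by exact_mod_cast hD
  simp only [Multiset.card_zero, Nat.cast_zero, dTot, Nat.cast_add, hin, hout] at hz ⊢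
  rw [max_eq_right (by positivity), max_eq_right (by positivity)]
  field_simp
  linear_combination hz

theorem abs_pos_sub_tpos_le_of_color_lt {η δ : ℝ} (hη : 0 < η) (hα : 0 ≤ α) (hαη : α ≤ η / 2)
    (hδ : 8 * δ ≤ η ^ 2) (hηk : η * (k - 1) ≤ 1) (hpos01 : ∀ u, pos u ∈ Set.Icc 0 1)
    (hproper : ∀ e ∈ E, χ e.1 ≠ χ e.2) (hv1 : 1 ≤ χ v) (hvk : χ v < k) (hD : 0 < dTot E v)
    (hA2in : η * dTot E v ≤ dIn E v) (hA2out : η * dTot E v ≤ dOut E v)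
    (hLi : |((EinLo E χ v).card : ℝ) - ((χ v : ℝ) - 1) / ((k : ℝ) - 1) * dIn E v|
      ≤ δ * dTot E v)
    (hLo : |((EoutLo E χ v).card : ℝ) - ((χ v : ℝ) - 1) / ((k : ℝ) - 1) * dOut E v|
      ≤ δ * dTot E v)
    (hpos : pos v = clamp ((yOut E χ α v + ((EoutLo E χ v).map fun e => 1 - pos e.2).sum
        - ((EinLo E χ v).map fun e => pos e.1).sum) / (yIn E χ α v + yOut E χ α v))) :
    |pos v - tpos E χ pos k α v| ≤ 8 / 3 * (δ / η + δ / η ^ 2) := by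
  set β : ℝ := ((χ v : ℝ) - 1) / ((k : ℝ) - 1) with hβ
  have hvk' : (χ v : ℝ) + 1 ≤ k := by exact_mod_cast hvk
  have hv1' : (1 : ℝ) ≤ χ v := by exact_mod_cast hv1
  have hk1 : (0 : ℝ) < k - 1 := by linarith
  have hβ0 : 0 ≤ β := div_nonneg (by linarith) hk1.le
  have hγ : η ≤ 1 - β := by
    rw [hβ, one_sub_div hk1.ne', le_div_iff₀ hk1]
    nlinarith
  have hin : ((EinLo E χ v).card : ℝ) + (EinHi E χ v).card = dIn E v := by
    exact_mod_cast card_EinLo_add_card_EinHi v hproper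
  have hout : ((EoutLo E χ v).card : ℝ) + (EoutHi E χ v).card = dOut E v := by
    exact_mod_cast card_EoutLo_add_card_EoutHi v hproper
  have hD' : (dTot E v : ℝ) = dIn E v + dOut E v := by push_cast [dTot]; rfl
  have hδD : δ * dTot E v ≤ η / 2 * (η * dTot E v) := by
    have : 0 ≤ δ * dTot E v := (abs_nonneg _).trans hLi
    nlinarith
  have hyIn : yIn E χ α v = (EinHi E χ v).card :=
    max_eq_left <| mul_le_of_add_eq_of_abs_sub_le hα (Nat.cast_nonneg _) hin hLi <|
      hδD.trans (mul_le_mul (by linarith) hA2in (by positivity) (by linarith))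
  have hyOut : yOut E χ α v = (EoutHi E χ v).card :=
    max_eq_left <| mul_le_of_add_eq_of_abs_sub_le hα (Nat.cast_nonneg _) hout hLo <|
      hδD.trans (mul_le_mul (by linarith) hA2out (by positivity) (by linarith))
  have htpos : tpos E χ pos k α v = clamp ((dOut E v - β * zbar E χ pos v * dTot E v)
      / ((1 - β) * dTot E v)) := by
    have hkv : (k : ℝ) - χ v ≠ 0 := by linarith
    have hD0 : (dTot E v : ℝ) ≠ 0 := by positivity
    have h1β : 1 - β = ((k : ℝ) - χ v) / ((k : ℝ) - 1) := by
      rw [hβ]; field_simp; ring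
    rw [tpos, if_neg hvk.ne, h1β, hβ]
    congr 1
    field_simp
  rw [hpos, htpos, hyIn, hyOut, Multiset.sum_map_one_sub, hD']
  rw [hD'] at hLi hLo
  have hD'' : (0 : ℝ) < dIn E v + dOut E v := by rw [← hD']; exact_mod_cast hD
  refine (abs_clamp_sub_clamp_le _ _).trans ?_
  exact abs_div_sub_div_le_of_lower_counts hη hβ0 hγ (zbar_mem_Icc E χ v hpos01)
    (Nat.cast_nonneg _) (Nat.cast_nonneg _) hD'' hin hout hLi hLo
    (zbar_mul_card E χ v pos).symm (by nlinarith)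

end Coloring

theorem stmt4_general {V : Type*} [DecidableEq V]
    (ε : ℝ) (hε0 : 0 < ε) (hε1 : ε ≤ 0.01)
    (k : ℕ) (hk : k = ⌈1 / ε ^ 2⌉₊)
    (α δ₀ : ℝ) (hα : α = ε ^ 4) (hδ₀ : δ₀ = ε ^ (4 ^ (k + 1)))
    (E : Multiset (V × V))
    (hnoiso : ∀ v : V, ∃ e ∈ E, e.1 = v ∨ e.2 = v)
    (χ : V → ℕ) (hχrange : ∀ v, χ v ∈ Finset.Icc 1 k)
    (hproper : ∀ e ∈ E, χ e.1 ≠ χ e.2)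
    (pos : V → ℝ)
    (hpos : ∀ v, pos v = clamp ((yOut E χ α v
        + ((EoutLo E χ v).map (fun e => 1 - pos e.2)).sum
        - ((EinLo E χ v).map (fun e => pos e.1)).sum)
        / (yIn E χ α v + yOut E χ α v)))
    (v : V)
    (hA2in : ε ^ 2 * (dTot E v : ℝ) ≤ (dIn E v : ℝ))
    (hA2out : ε ^ 2 * (dTot E v : ℝ) ≤ (dOut E v : ℝ))
    (hA3 : ∀ a ∈ Finset.Icc 1 k, a ≠ χ v →
      |(dInC E χ v a : ℝ) - (dIn E v : ℝ) / ((k : ℝ) - 1)| ≤ δ₀ * (dTot E v : ℝ) / ((k : ℝ) - 1) ∧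
      |(dOutC E χ v a : ℝ) - (dOut E v : ℝ) / ((k : ℝ) - 1)| ≤ δ₀ * (dTot E v : ℝ) / ((k : ℝ) - 1)) :
    |pos v - tpos E χ pos k α v| ≤ 3 * δ₀ * (k : ℝ) ^ 2 := by
  have hη : 0 < ε ^ 2 := by positivity
  have hε2 : ε ^ 2 ≤ 1 / 10000 := by nlinarith
  have hεk : 1 ≤ ε ^ 2 * k := hk ▸ one_le_mul_ceil_one_div hη
  have hk8 : (8 : ℝ) ≤ k := by nlinarith
  have hδ0 : 0 ≤ δ₀ := hδ₀ ▸ by positivity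
  have hδ : 8 * δ₀ ≤ (ε ^ 2) ^ 2 := by
    rw [hδ₀]
    exact eight_mul_pow_four_pow_le hε0.le hε1 (by exact_mod_cast (by linarith : (1 : ℝ) ≤ k))
  have hD := dTot_pos E v (hnoiso v)
  have hpos01 : ∀ u, pos u ∈ Set.Icc 0 1 := fun u => hpos u ▸ clamp_mem_Icc_s4 _
  obtain ⟨hv1, hvk⟩ := Finset.mem_Icc.1 (hχrange v)
  rcases hvk.eq_or_lt with htop | hlt
  · rw [pos_eq_tpos_of_color_eq (hα ▸ by positivity) hproper
      (fun u => (Finset.mem_Icc.1 (hχrange u)).2) htop hD (hpos v), sub_self, abs_zero]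
    positivity
  · have hr : 0 ≤ δ₀ * dTot E v := by positivity
    calc |pos v - tpos E χ pos k α v| ≤ 8 / 3 * (δ₀ / ε ^ 2 + δ₀ / (ε ^ 2) ^ 2) :=
          abs_pos_sub_tpos_le_of_color_lt hη (hα ▸ by positivity) (by rw [hα]; nlinarith) hδ
            (hk ▸ mul_ceil_one_div_sub_one_le hη) hpos01 hproper hv1 hlt hD hA2in hA2out
            (abs_card_EinLo_sub_le hχrange hr fun a ha hne => (hA3 a ha hne).1)
            (abs_card_EoutLo_sub_le hχrange hr fun a ha hne => (hA3 a ha hne).2) (hpos v)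
      _ ≤ 3 * δ₀ * k ^ 2 := eight_thirds_mul_add_div_sq_le hη hδ0 hεk hk8

/-- Fix `ε ∈ (0, 0.01]`, an integer `n`, `k = ⌈1/ε²⌉`, `α = ε⁴`, `δ₀ = ε^(4^(k+1))`,
`q = 2^(−(k+1))`. For a finite directed graph on at most `n` vertices with a proper
`k`-coloring, no isolated vertices, and `pos` defined by Algorithm 1 with parameter `α`:
if `v` is a vertex with `d(v) ≥ n^(2q)` satisfying (A2) and (A3), then
`|pos(v) − tpos(v)| ≤ 3·δ₀·k²`. -/
theorem stmt4 {V : Type*} [Fintype V] [DecidableEq V]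
    (ε : ℝ) (hε0 : 0 < ε) (hε1 : ε ≤ 0.01) (n : ℕ)
    (k : ℕ) (hk : k = ⌈1 / ε ^ 2⌉₊)
    (α δ₀ q : ℝ) (hα : α = ε ^ 4) (hδ₀ : δ₀ = ε ^ (4 ^ (k + 1)))
    (hq : q = (2 : ℝ) ^ (-((k : ℝ) + 1)))
    (E : Multiset (V × V)) (hV : Fintype.card V ≤ n)
    (hnoiso : ∀ v : V, ∃ e ∈ E, e.1 = v ∨ e.2 = v)
    (χ : V → ℕ) (hχrange : ∀ v, χ v ∈ Finset.Icc 1 k)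
    (hproper : ∀ e ∈ E, χ e.1 ≠ χ e.2)
    (pos : V → ℝ)
    (hpos : ∀ v, pos v = clamp ((yOut E χ α v
        + ((EoutLo E χ v).map (fun e => 1 - pos e.2)).sum
        - ((EinLo E χ v).map (fun e => pos e.1)).sum)
        / (yIn E χ α v + yOut E χ α v)))
    (v : V) (hdeg : ((n : ℝ)) ^ (2 * q) ≤ (dTot E v : ℝ))
    (hA2in : ε ^ 2 * (dTot E v : ℝ) ≤ (dIn E v : ℝ))
    (hA2out : ε ^ 2 * (dTot E v : ℝ) ≤ (dOut E v : ℝ))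
    (hA3 : ∀ a ∈ Finset.Icc 1 k, a ≠ χ v →
      |(dInC E χ v a : ℝ) - (dIn E v : ℝ) / ((k : ℝ) - 1)| ≤ δ₀ * (dTot E v : ℝ) / ((k : ℝ) - 1) ∧
      |(dOutC E χ v a : ℝ) - (dOut E v : ℝ) / ((k : ℝ) - 1)| ≤ δ₀ * (dTot E v : ℝ) / ((k : ℝ) - 1)) :
    |pos v - tpos E χ pos k α v| ≤ 3 * δ₀ * (k : ℝ) ^ 2 :=
  stmt4_general ε hε0 hε1 k hk α δ₀ hα hδ₀ E hnoiso χ hχrange hproper pos hpos v hA2in hA2out hA3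
end
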